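/- Fix an integer n ≥ 1. If the minimum of ‖W‖_* over all matrices W ∈ ℝ^{(2n+2)×(2n)} satisfying the one-hop margin constraints (without the identity-bridge constraint) is attained, then it is attained by a matrix of symmetric form whose parameters satisfy a1 ≥ 1 and a1+a2+α ≥ b1+b2+β+1. -/

import Mathlib

/-!
Relabelling the indices by a permutation `σ` of `Fin n` and exchanging the two hops
(`a ↔ b`, `r₁ ↔ r₂` on rows, `b ↔ c` on columns) preserves the margin constraints and the
nuclear norm. The constraints are convex, and so is the nuclear norm, by its variational
description `‖A‖_* = max {tr (Uᵀ A) | Uᵀ U ≤ 1}`. Hence the average of a minimiser over this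
finite group of symmetries is again a feasible minimiser; being invariant it has symmetric
form, and the margin constraints of that form give `a1 ≥ 1` (for `n = 1` the split of the
diagonal weight between `a1` and `a2` is free) and `a1 + a2 + α ≥ b1 + b2 + β + 1`.
-/

/-- The nuclear norm of a real matrix: the trace of the positive semidefinite
square root of `Wᵀ * W` (equivalently, the sum of the singular values of `W`). -/
noncomputable def nuclearNorm {m k : Type*} [Fintype m] [Fintype k] [DecidableEq k]
    (W : Matrix m k ℝ) : ℝ :=
  ((Matrix.posSemidef_conjTranspose_mul_self W).1.eigenvectorUnitary.1 *
    Matrix.diagonal ((√·) ∘ (Matrix.posSemidef_conjTranspose_mul_self W).1.eigenvalues) *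
    (star (Matrix.posSemidef_conjTranspose_mul_self W).1.eigenvectorUnitary : Matrix k k ℝ)).trace

/-- The symmetric-form matrix in `ℝ^{(2n+2)×(2n)}`.  Rows are indexed by the input
tokens `a_1,…,a_n` (`Sum.inl i`), `b_1,…,b_n` (`Sum.inr (Sum.inl i)`) and the relation
tokens `r_1, r_2` (`Sum.inr (Sum.inr k)`, `k = 0, 1`); columns by the output tokens
`b_1,…,b_n` (`Sum.inl j`) and `c_1,…,c_n` (`Sum.inr j`). -/
def symW (n : ℕ) (a1 a2 b1 b2 α β : ℝ) :
    Matrix (Fin n ⊕ Fin n ⊕ Fin 2) (Fin n ⊕ Fin n) ℝ :=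
  fun r y =>
    match r, y with
    | Sum.inl i, Sum.inl j => (if i = j then a1 else 0) + a2
    | Sum.inl i, Sum.inr j => (if i = j then b1 else 0) + b2
    | Sum.inr (Sum.inl i), Sum.inl j => (if i = j then b1 else 0) + b2
    | Sum.inr (Sum.inl i), Sum.inr j => (if i = j then a1 else 0) + a2
    | Sum.inr (Sum.inr k), Sum.inl _ => if k = 0 then α else β
    | Sum.inr (Sum.inr k), Sum.inr _ => if k = 0 then β else α

/-- The one-hop margin constraints: for every `i`,
`W[a_i,b_i] + W[r_1,b_i] ≥ W[a_i,y] + W[r_1,y] + 1` for every output token `y ≠ b_i`, and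
`W[b_i,c_i] + W[r_2,c_i] ≥ W[b_i,y] + W[r_2,y] + 1` for every output token `y ≠ c_i`. -/
def OneHopMargin (n : ℕ) (W : Matrix (Fin n ⊕ Fin n ⊕ Fin 2) (Fin n ⊕ Fin n) ℝ) : Prop :=
  ∀ i : Fin n,
    (∀ y : Fin n ⊕ Fin n, y ≠ Sum.inl i →
      W (Sum.inl i) (Sum.inl i) + W (Sum.inr (Sum.inr 0)) (Sum.inl i)
        ≥ W (Sum.inl i) y + W (Sum.inr (Sum.inr 0)) y + 1) ∧
    (∀ y : Fin n ⊕ Fin n, y ≠ Sum.inr i →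
      W (Sum.inr (Sum.inl i)) (Sum.inr i) + W (Sum.inr (Sum.inr 1)) (Sum.inr i)
        ≥ W (Sum.inr (Sum.inl i)) y + W (Sum.inr (Sum.inr 1)) y + 1)

open Matrix

namespace Matrix

section

variable {m k : Type*} [Fintype m]

theorem transpose_mul_submatrix_equiv {m' k' : Type*} [Fintype m'] (U B : Matrix m k ℝ)
    (e : m' ≃ m) (f : k' ≃ k) :
    (U.submatrix e f)ᵀ * B.submatrix e f = (Uᵀ * B).submatrix f f := by
  rw [transpose_submatrix, submatrix_mul_equiv]

variable [DecidableEq k]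

def IsContraction (U : Matrix m k ℝ) : Prop := (1 - Uᵀ * U).PosSemidef

theorem IsContraction.submatrix {m' k' : Type*} [Fintype m'] [DecidableEq k']
    {U : Matrix m k ℝ} (hU : U.IsContraction) (e : m' ≃ m) (f : k' ≃ k) :
    (U.submatrix e f).IsContraction := by
  rw [IsContraction, transpose_mul_submatrix_equiv, ← submatrix_one_equiv f]
  exact PosSemidef.submatrix hU f

end

variable {m k : Type*} [Fintype m] [Fintype k]

theorem trace_submatrix_equiv {k' : Type*} [Fintype k'] (M : Matrix k k ℝ) (f : k' ≃ k) :
    (M.submatrix f f).trace = M.trace :=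
  Fintype.sum_equiv f _ _ fun _ => rfl

theorem trace_transpose_mul_le (X Y : Matrix m k ℝ) :
    (Xᵀ * Y).trace ≤ ∑ j, √((Xᵀ * X) j j) * √((Yᵀ * Y) j j) := by
  simp only [trace, diag_apply, mul_apply, transpose_apply, ← sq]
  exact Finset.sum_le_sum fun j _ => Real.sum_mul_le_sqrt_mul_sqrt _ _ _

variable [DecidableEq k] (A : Matrix m k ℝ)

noncomputable def gramEigenvalues : k → ℝ := (posSemidef_conjTranspose_mul_self A).1.eigenvalues

noncomputable def gramEigenbasis : Matrix k k ℝ :=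
  (posSemidef_conjTranspose_mul_self A).1.eigenvectorUnitary

theorem gramEigenvalues_nonneg (j : k) : 0 ≤ A.gramEigenvalues j :=
  (posSemidef_conjTranspose_mul_self A).eigenvalues_nonneg j

theorem gramEigenbasis_transpose_mul_self : A.gramEigenbasisᵀ * A.gramEigenbasis = 1 := by
  simpa [gramEigenbasis, star_eq_conjTranspose] using
    mem_unitaryGroup_iff'.mp (posSemidef_conjTranspose_mul_self A).1.eigenvectorUnitary.2

theorem gramEigenbasis_mul_transpose_self : A.gramEigenbasis * A.gramEigenbasisᵀ = 1 := by
  simpa [gramEigenbasis, star_eq_conjTranspose] using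
    mem_unitaryGroup_iff.mp (posSemidef_conjTranspose_mul_self A).1.eigenvectorUnitary.2

theorem transpose_mul_self_spectral :
    Aᵀ * A = A.gramEigenbasis * diagonal A.gramEigenvalues * A.gramEigenbasisᵀ := by
  simpa [gramEigenbasis, gramEigenvalues, star_eq_conjTranspose] using
    (posSemidef_conjTranspose_mul_self A).1.spectral_theorem

theorem mul_gramEigenbasis_transpose_mul_self :
    (A * A.gramEigenbasis)ᵀ * (A * A.gramEigenbasis) = diagonal A.gramEigenvalues := by
  rw [transpose_mul, Matrix.mul_assoc, ← Matrix.mul_assoc Aᵀ, transpose_mul_self_spectral]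
  simp only [Matrix.mul_assoc, gramEigenbasis_transpose_mul_self, Matrix.mul_one]
  rw [← Matrix.mul_assoc, gramEigenbasis_transpose_mul_self, Matrix.one_mul]

end Matrix

section NuclearNorm

variable {m k : Type*} [Fintype m] [Fintype k] [DecidableEq k] (A : Matrix m k ℝ)

theorem nuclearNorm_eq_sum_sqrt_gramEigenvalues :
    nuclearNorm A = ∑ j, √(A.gramEigenvalues j) := by
  change (A.gramEigenbasis * diagonal (fun j => √(A.gramEigenvalues j)) *
    A.gramEigenbasisᵀ).trace = _
  rw [trace_mul_cycle, gramEigenbasis_transpose_mul_self, Matrix.one_mul, trace_diagonal]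

theorem trace_transpose_mul_le_nuclearNorm {U : Matrix m k ℝ} (hU : U.IsContraction) :
    (Uᵀ * A).trace ≤ nuclearNorm A := by
  set V := A.gramEigenbasis
  have hcol (j : k) : ((U * V)ᵀ * (U * V)) j j ≤ 1 := by
    have := (hU.conjTranspose_mul_mul_same V).diag_nonneg (i := j)
    simpa [conjTranspose_eq_transpose_of_trivial, Matrix.mul_sub, Matrix.sub_mul,
      gramEigenbasis_transpose_mul_self, transpose_mul, Matrix.mul_assoc, V] using this
  calc (Uᵀ * A).trace = ((U * V)ᵀ * (A * V)).trace := by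
        rw [transpose_mul, Matrix.mul_assoc, trace_mul_comm Vᵀ, Matrix.mul_assoc,
          Matrix.mul_assoc, gramEigenbasis_mul_transpose_self, Matrix.mul_one]
    _ ≤ ∑ j, √(((U * V)ᵀ * (U * V)) j j) * √(diagonal A.gramEigenvalues j j) := by
        rw [← mul_gramEigenbasis_transpose_mul_self]
        exact trace_transpose_mul_le _ _
    _ ≤ ∑ j, 1 * √(A.gramEigenvalues j) := by
        gcongr with j
        · exact Real.sqrt_le_one.mpr (hcol j)
        · simp
    _ = nuclearNorm A := by simp [nuclearNorm_eq_sum_sqrt_gramEigenvalues]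

theorem exists_isContraction_trace_transpose_mul_eq_nuclearNorm :
    ∃ U : Matrix m k ℝ, U.IsContraction ∧ (Uᵀ * A).trace = nuclearNorm A := by
  set V := A.gramEigenbasis
  set B := A * V
  -- The partial isometry of the polar decomposition of `A`; `(√0)⁻¹ = 0` handles the kernel.
  set g : k → ℝ := fun j => (√(A.gramEigenvalues j))⁻¹
  have hg_mul (j : k) : g j * A.gramEigenvalues j = √(A.gramEigenvalues j) := by
    rcases (A.gramEigenvalues_nonneg j).eq_or_lt with h | h
    · simp [g, ← h]
    · simp only [g]
      field_simp
      exact (Real.sq_sqrt h.le).symm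
  have hBB : Bᵀ * B = diagonal A.gramEigenvalues := A.mul_gramEigenbasis_transpose_mul_self
  refine ⟨B * diagonal g * Vᵀ, ?_, ?_⟩
  · have hdiag : (diagonal fun j => 1 - g j * g j * A.gramEigenvalues j).PosSemidef :=
      posSemidef_diagonal_iff.mpr fun j => by
        rw [sub_nonneg, mul_assoc, hg_mul]
        by_cases h0 : √(A.gramEigenvalues j) = 0
        · simp [g, h0]
        · simp [g, inv_mul_cancel₀ h0]
    have hdiag_eq : diagonal (fun j => 1 - g j * g j * A.gramEigenvalues j) =
        1 - diagonal g * (Bᵀ * B) * diagonal g := by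
      rw [hBB, diagonal_mul_diagonal, diagonal_mul_diagonal, ← diagonal_one, diagonal_sub]
      congr 1; ext j; ring
    have h : 1 - (B * diagonal g * Vᵀ)ᵀ * (B * diagonal g * Vᵀ) =
        V * diagonal (fun j => 1 - g j * g j * A.gramEigenvalues j) * Vᵀ := by
      rw [hdiag_eq, Matrix.mul_sub, Matrix.sub_mul, Matrix.mul_one,
        gramEigenbasis_mul_transpose_self]
      simp only [transpose_mul, diagonal_transpose, transpose_transpose, Matrix.mul_assoc]
    rw [IsContraction, h]
    simpa only [conjTranspose_eq_transpose_of_trivial] using hdiag.mul_mul_conjTranspose_same V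
  · calc ((B * diagonal g * Vᵀ)ᵀ * A).trace = (diagonal g * (Bᵀ * B)).trace := by
          simp only [transpose_mul, diagonal_transpose, transpose_transpose, Matrix.mul_assoc, B]
          rw [trace_mul_comm]
          simp only [Matrix.mul_assoc]
      _ = nuclearNorm A := by
          rw [hBB, diagonal_mul_diagonal, trace_diagonal, nuclearNorm_eq_sum_sqrt_gramEigenvalues]
          exact Finset.sum_congr rfl fun j _ => hg_mul j

theorem nuclearNorm_add_le (B : Matrix m k ℝ) :
    nuclearNorm (A + B) ≤ nuclearNorm A + nuclearNorm B := by
  obtain ⟨U, hU, hUAB⟩ := exists_isContraction_trace_transpose_mul_eq_nuclearNorm (A + B)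
  rw [← hUAB, Matrix.mul_add, trace_add]
  exact add_le_add (trace_transpose_mul_le_nuclearNorm A hU)
    (trace_transpose_mul_le_nuclearNorm B hU)

variable {A}

theorem nuclearNorm_le_of_forall_trace_le {c : ℝ}
    (h : ∀ U : Matrix m k ℝ, U.IsContraction → (Uᵀ * A).trace ≤ c) : nuclearNorm A ≤ c := by
  obtain ⟨U, hU, hUA⟩ := exists_isContraction_trace_transpose_mul_eq_nuclearNorm A
  exact hUA ▸ h U hU

theorem nuclearNorm_smul_le {c : ℝ} (hc : 0 ≤ c) : nuclearNorm (c • A) ≤ c * nuclearNorm A :=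
  nuclearNorm_le_of_forall_trace_le fun U hU => by
    rw [Matrix.mul_smul, trace_smul, smul_eq_mul]
    exact mul_le_mul_of_nonneg_left (trace_transpose_mul_le_nuclearNorm A hU) hc

theorem nuclearNorm_submatrix_le {m' k' : Type*} [Fintype m'] [Fintype k'] [DecidableEq k']
    (e : m' ≃ m) (f : k' ≃ k) : nuclearNorm (A.submatrix e f) ≤ nuclearNorm A :=
  nuclearNorm_le_of_forall_trace_le fun U hU => by
    have hU_eq : U = (U.submatrix e.symm f.symm).submatrix e f := by simp
    rw [hU_eq, transpose_mul_submatrix_equiv, trace_submatrix_equiv]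
    exact trace_transpose_mul_le_nuclearNorm A (hU.submatrix e.symm f.symm)

theorem convexOn_nuclearNorm : ConvexOn ℝ Set.univ (nuclearNorm : Matrix m k ℝ → ℝ) :=
  ⟨convex_univ, fun _ _ _ _ _ _ ha hb _ =>
    (nuclearNorm_add_le _ _).trans (add_le_add (nuclearNorm_smul_le ha) (nuclearNorm_smul_le hb))⟩

end NuclearNorm

section OrbitAverage

variable (G : Type*) [Group G] [Fintype G] {m k : Type*} [MulAction G m] [MulAction G k]

noncomputable def orbitAverage (W : Matrix m k ℝ) : Matrix m k ℝ :=
  ∑ g : G, (Fintype.card G : ℝ)⁻¹ • W.submatrix (g • ·) (g • ·)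

variable {G} {W : Matrix m k ℝ}

theorem orbitAverage_smul_apply (g : G) (i : m) (j : k) :
    orbitAverage G W (g • i) (g • j) = orbitAverage G W i j := by
  simp only [orbitAverage, Matrix.sum_apply, Matrix.smul_apply, submatrix_apply, smul_smul]
  exact Fintype.sum_equiv (Equiv.mulRight g) _ _ fun _ => rfl

theorem orbitAverage_mem {S : Set (Matrix m k ℝ)} (hS : Convex ℝ S)
    (hSG : ∀ g : G, ∀ V ∈ S, V.submatrix (g • ·) (g • ·) ∈ S) (hW : W ∈ S) :
    orbitAverage G W ∈ S :=
  hS.sum_mem (fun _ _ => by positivity) (by simp) fun g _ => hSG g W hW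

theorem nuclearNorm_orbitAverage_le [Fintype m] [Fintype k] [DecidableEq k] :
    nuclearNorm (orbitAverage G W) ≤ nuclearNorm W := by
  refine (convexOn_nuclearNorm.map_sum_le (fun _ _ => by positivity) (by simp)
    fun _ _ => Set.mem_univ _).trans ?_
  calc ∑ g : G, (Fintype.card G : ℝ)⁻¹ • nuclearNorm (W.submatrix (g • ·) (g • ·))
      ≤ ∑ _g : G, (Fintype.card G : ℝ)⁻¹ • nuclearNorm W := by
        gcongr with g
        exact nuclearNorm_submatrix_le (MulAction.toPerm g) (MulAction.toPerm g)
    _ = nuclearNorm W := by simp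

end OrbitAverage
section PermInvariant

open Equiv

variable {ι : Type*} [DecidableEq ι]

theorem exists_perm_apply_eq_apply_eq {i j i' j' : ι} (hij : i ≠ j) (hij' : i' ≠ j') :
    ∃ σ : Perm ι, σ i = i' ∧ σ j = j' := by
  have hj : swap i i' j ≠ i' := by
    simpa using (swap i i').injective.ne hij.symm
  refine ⟨(swap i i').trans (swap (swap i i' j) j'), ?_, swap_apply_left _ _⟩
  rw [trans_apply, swap_apply_left, swap_apply_of_ne_of_ne hj.symm hij']

variable {F : ι → ι → ℝ}

theorem apply_self_eq_of_perm_invariant (hF : ∀ (σ : Perm ι) (i j : ι), F (σ i) (σ j) = F i j)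
    (i j : ι) : F i i = F j j := by
  simpa using (hF (swap i j) i i).symm

theorem exists_eq_ite_add_of_perm_invariant
    (hF : ∀ (σ : Perm ι) (i j : ι), F (σ i) (σ j) = F i j) (i₀ : ι) {c : ℝ}
    (hc : ∀ i j, i ≠ j → F i j ≤ c) :
    ∃ o ≤ c, ∀ i j, F i j = (if i = j then F i₀ i₀ - o else 0) + o := by
  obtain ⟨o, hoc, ho⟩ : ∃ o ≤ c, ∀ i j, i ≠ j → F i j = o := by
    by_cases h : ∃ i j : ι, i ≠ j
    · obtain ⟨i, j, hij⟩ := h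
      refine ⟨F i j, hc i j hij, fun i' j' hij' => ?_⟩
      obtain ⟨σ, rfl, rfl⟩ := exists_perm_apply_eq_apply_eq hij hij'
      exact hF σ i j
    · push Not at h
      exact ⟨c, le_rfl, fun i j hij => absurd (h i j) hij⟩
  refine ⟨o, hoc, fun i j => ?_⟩
  split_ifs with hij
  · rw [← hij, apply_self_eq_of_perm_invariant hF i i₀, sub_add_cancel]
  · rw [ho i j hij, zero_add]

end PermInvariant

section Tokens

open Equiv

variable {n : ℕ}

-- Hop `0` leads from `a_i` through `r₁` to `b_i`, hop `1` from `b_i` through `r₂` to `c_i`.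
def inputToken (l : Fin 2) (i : Fin n) : Fin n ⊕ Fin n ⊕ Fin 2 := ![.inl i, .inr (.inl i)] l

def outputToken (l : Fin 2) (j : Fin n) : Fin n ⊕ Fin n := ![.inl j, .inr j] l

def relationToken (l : Fin 2) : Fin n ⊕ Fin n ⊕ Fin 2 := .inr (.inr l)

instance : SMul (Perm (Fin n) × Perm (Fin 2)) (Fin n ⊕ Fin n ⊕ Fin 2) where
  smul g
    | .inl i => inputToken (g.2 0) (g.1 i)
    | .inr (.inl i) => inputToken (g.2 1) (g.1 i)
    | .inr (.inr l) => relationToken (g.2 l)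

instance : SMul (Perm (Fin n) × Perm (Fin 2)) (Fin n ⊕ Fin n) where
  smul g
    | .inl j => outputToken (g.2 0) (g.1 j)
    | .inr j => outputToken (g.2 1) (g.1 j)

variable (g : Perm (Fin n) × Perm (Fin 2)) (l : Fin 2)

@[simp] theorem smul_inputToken (i : Fin n) :
    g • inputToken l i = inputToken (g.2 l) (g.1 i) := by
  fin_cases l <;> rfl

@[simp] theorem smul_outputToken (j : Fin n) :
    g • outputToken l j = outputToken (g.2 l) (g.1 j) := by
  fin_cases l <;> rfl

@[simp] theorem smul_relationToken :
    g • (relationToken l : Fin n ⊕ Fin n ⊕ Fin 2) = relationToken (g.2 l) := rfl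

instance : MulAction (Perm (Fin n) × Perm (Fin 2)) (Fin n ⊕ Fin n ⊕ Fin 2) where
  one_smul := by rintro (i | i | l) <;> rfl
  mul_smul g h := by
    rintro (i | i | l)
    · exact (smul_inputToken g (h.2 0) (h.1 i)).symm
    · exact (smul_inputToken g (h.2 1) (h.1 i)).symm
    · rfl

instance : MulAction (Perm (Fin n) × Perm (Fin 2)) (Fin n ⊕ Fin n) where
  one_smul := by rintro (j | j) <;> rfl
  mul_smul g h := by
    rintro (j | j)
    · exact (smul_outputToken g (h.2 0) (h.1 j)).symm
    · exact (smul_outputToken g (h.2 1) (h.1 j)).symm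

variable {W : Matrix (Fin n ⊕ Fin n ⊕ Fin 2) (Fin n ⊕ Fin n) ℝ}

theorem oneHopMargin_iff : OneHopMargin n W ↔ ∀ (l : Fin 2) (i : Fin n) (y : Fin n ⊕ Fin n),
    y ≠ outputToken l i → W (inputToken l i) y + W (relationToken l) y + 1 ≤
      W (inputToken l i) (outputToken l i) + W (relationToken l) (outputToken l i) := by
  refine ⟨fun h l i => ?_, fun h i => ⟨h 0 i, h 1 i⟩⟩
  fin_cases l
  exacts [(h i).1, (h i).2]

theorem convex_setOf_oneHopMargin : Convex ℝ {W | OneHopMargin n W} := by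
  intro W hW V hV a b ha hb hab
  simp only [Set.mem_ofPred_eq, oneHopMargin_iff] at hW hV ⊢
  intro l i y hy
  have hW' := mul_le_mul_of_nonneg_left (hW l i y hy) ha
  have hV' := mul_le_mul_of_nonneg_left (hV l i y hy) hb
  simp only [Matrix.add_apply, Matrix.smul_apply, smul_eq_mul]
  linarith

theorem OneHopMargin.submatrix_smul (hW : OneHopMargin n W) :
    OneHopMargin n (W.submatrix (g • ·) (g • ·)) := by
  rw [oneHopMargin_iff] at hW ⊢
  intro l i y hy
  have hgy : g • y ≠ outputToken (g.2 l) (g.1 i) := by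
    rwa [← smul_outputToken, Ne, smul_left_cancel_iff]
  simpa only [Matrix.submatrix_apply, smul_inputToken, smul_outputToken, smul_relationToken]
    using hW (g.2 l) (g.1 i) (g • y) hgy

end Tokens

section SymmetricForm

open Equiv

variable {n : ℕ} {W : Matrix (Fin n ⊕ Fin n ⊕ Fin 2) (Fin n ⊕ Fin n) ℝ}

theorem exists_symW_eq_of_smul_invariant (i₀ : Fin n)
    (hW : ∀ (g : Perm (Fin n) × Perm (Fin 2)) r y, W (g • r) (g • y) = W r y)
    (hmargin : OneHopMargin n W) :
    ∃ a1 a2 b1 b2 α β : ℝ, W = symW n a1 a2 b1 b2 α β ∧ 1 ≤ a1 := by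
  set ab : Fin n → Fin n → ℝ := fun i j => W (.inl i) (.inl j)
  set ac : Fin n → Fin n → ℝ := fun i j => W (.inl i) (.inr j)
  have hab (σ : Perm (Fin n)) (i j : Fin n) : ab (σ i) (σ j) = ab i j :=
    hW (σ, 1) (.inl i) (.inl j)
  have hac (σ : Perm (Fin n)) (i j : Fin n) : ac (σ i) (σ j) = ac i j :=
    hW (σ, 1) (.inl i) (.inr j)
  set α := W (.inr (.inr 0)) (.inl i₀)
  set β := W (.inr (.inr 0)) (.inr i₀)
  have hα (j : Fin n) : W (.inr (.inr 0)) (.inl j) = α := by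
    have : W (.inr (.inr 0)) (.inl (swap j i₀ j)) = _ :=
      hW (swap j i₀, 1) (.inr (.inr 0)) (.inl j)
    rwa [swap_apply_left, eq_comm] at this
  have hβ (j : Fin n) : W (.inr (.inr 0)) (.inr j) = β := by
    have : W (.inr (.inr 0)) (.inr (swap j i₀ j)) = _ :=
      hW (swap j i₀, 1) (.inr (.inr 0)) (.inr j)
    rwa [swap_apply_left, eq_comm] at this
  have hab_diag (i : Fin n) : ab i i = ab i₀ i₀ := apply_self_eq_of_perm_invariant hab i i₀
  obtain ⟨oab, hoab, hab_eq⟩ := exists_eq_ite_add_of_perm_invariant hab i₀ (c := ab i₀ i₀ - 1)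
    fun i j hij => by
      have := (hmargin i).1 (.inl j) (by simpa using hij.symm)
      rw [hα, hα] at this
      linarith [hab_diag i]
  obtain ⟨oac, -, hac_eq⟩ :=
    exists_eq_ite_add_of_perm_invariant hac i₀ (c := ab i₀ i₀ + α - β - 1) fun i j _ => by
      have := (hmargin i).1 (.inr j) Sum.inr_ne_inl
      rw [hα, hβ] at this
      linarith [hab_diag i]
  refine ⟨ab i₀ i₀ - oab, oab, ac i₀ i₀ - oac, oac, α, β, ?_, by linarith⟩
  have hswap := hW (1, swap 0 1)
  ext r y
  rcases r with i | i | l <;> rcases y with j | j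
  · exact hab_eq i j
  · exact hac_eq i j
  · exact (hswap (.inl i) (.inr j)).trans (hac_eq i j)
  · exact (hswap (.inl i) (.inl j)).trans (hab_eq i j)
  · fin_cases l
    · exact hα j
    · exact (hswap (.inr (.inr 0)) (.inr j)).trans (hβ j)
  · fin_cases l
    · exact hβ j
    · exact (hswap (.inr (.inr 0)) (.inl j)).trans (hα j)

end SymmetricForm

/-- Existence of a symmetric-form solution: if the minimum of the nuclear norm over all
matrices satisfying the one-hop margin constraints (without the identity-bridge
constraint) is attained, then it is attained by a symmetric-form matrix whose
parameters satisfy `a1 ≥ 1` and `a1+a2+α ≥ b1+b2+β+1`. -/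
theorem symmetric_form_solution_without_identity (n : ℕ) (hn : 1 ≤ n)
    (W0 : Matrix (Fin n ⊕ Fin n ⊕ Fin 2) (Fin n ⊕ Fin n) ℝ)
    (hW0 : OneHopMargin n W0)
    (hmin : ∀ W : Matrix (Fin n ⊕ Fin n ⊕ Fin 2) (Fin n ⊕ Fin n) ℝ,
      OneHopMargin n W → nuclearNorm W0 ≤ nuclearNorm W) :
    ∃ a1 a2 b1 b2 α β : ℝ,
      OneHopMargin n (symW n a1 a2 b1 b2 α β) ∧
      nuclearNorm (symW n a1 a2 b1 b2 α β) = nuclearNorm W0 ∧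
      1 ≤ a1 ∧
      b1 + b2 + β + 1 ≤ a1 + a2 + α := by
  have hW : OneHopMargin n (orbitAverage (Equiv.Perm (Fin n) × Equiv.Perm (Fin 2)) W0) :=
    orbitAverage_mem convex_setOf_oneHopMargin (fun g _ hV => hV.submatrix_smul g) hW0
  obtain ⟨a1, a2, b1, b2, α, β, hWeq, ha1⟩ :=
    exists_symW_eq_of_smul_invariant ⟨0, hn⟩ (fun g => orbitAverage_smul_apply g) hW
  have hnorm : nuclearNorm (symW n a1 a2 b1 b2 α β) ≤ nuclearNorm W0 :=
    hWeq ▸ nuclearNorm_orbitAverage_le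
  rw [hWeq] at hW
  refine ⟨a1, a2, b1, b2, α, β, hW, hnorm.antisymm (hmin _ hW), ha1, ?_⟩
  simpa [symW] using (hW ⟨0, hn⟩).1 (.inr ⟨0, hn⟩) Sum.inr_ne_inl
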